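/- arXiv:1705.03803 — 8 statements merged into one kernel-verified Lean document; each statement's English description precedes it below -/
import Mathlib

section
/- Let A be a maximally monotone operator on a real Hilbert space H, let γ, δ > 0 and x, y ∈ H. Then for each z ∈ A^{-1}(0), ‖γ A_γ x − δ A_δ y‖ ≤ 2‖x − y‖ + 2‖x − z‖ |γ − δ|/γ. -/
open scoped RealInnerProductSpace

variable {H : Type*} [NormedAddCommGroup H] [InnerProductSpace ℝ H] [CompleteSpace H]

/-- A set-valued operator `A : H → 2^H` is monotone. -/
def MonotoneOp (A : H → Set H) : Prop :=
  ∀ ⦃x y u v : H⦄, u ∈ A x → v ∈ A y → 0 ≤ ⟪u - v, x - y⟫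

/-- A set-valued operator is maximally monotone: monotone and with no proper
monotone extension. -/
def MaximallyMonotone (A : H → Set H) : Prop :=
  MonotoneOp A ∧
    ∀ x u : H, (∀ y v : H, v ∈ A y → 0 ≤ ⟪u - v, x - y⟫) → u ∈ A x

/-- `J` is the resolvent `(I + lam A)⁻¹` of `A` with index `lam`:
for every `x`, `J x + lam • A (J x) ∋ x`, i.e. `lam⁻¹ • (x - J x) ∈ A (J x)`. -/
def IsResolvent (A : H → Set H) (lam : ℝ) (J : H → H) : Prop :=
  ∀ x : H, lam⁻¹ • (x - J x) ∈ A (J x)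

/-- Resolvents of monotone operators are nonexpansive. -/
lemma resolvent_nonexp {A : H → Set H} (hA : MonotoneOp A) {lam : ℝ} (hlam : 0 < lam)
    {J : H → H} (hJ : IsResolvent A lam J) (a b : H) : ‖J a - J b‖ ≤ ‖a - b‖ := by
  have h := hA (hJ a) (hJ b)
  rw [← smul_sub, real_inner_smul_left] at h
  have hinv : (0:ℝ) < lam⁻¹ := inv_pos.2 hlam
  have h2 : 0 ≤ ⟪a - J a - (b - J b), J a - J b⟫ := by
    nlinarith [h, hinv]
  have h3 : ⟪J a - J b, J a - J b⟫ ≤ ⟪a - b, J a - J b⟫ := by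
    have hrw : a - b = (a - J a - (b - J b)) + (J a - J b) := by abel
    rw [hrw, inner_add_left]; linarith
  have h4 : ‖J a - J b‖ ^ 2 ≤ ‖a - b‖ * ‖J a - J b‖ := by
    calc ‖J a - J b‖ ^ 2 = ⟪J a - J b, J a - J b⟫ := (real_inner_self_eq_norm_sq _).symm
      _ ≤ ⟪a - b, J a - J b⟫ := h3
      _ ≤ ‖a - b‖ * ‖J a - J b‖ := real_inner_le_norm _ _
  nlinarith [norm_nonneg (J a - J b), norm_nonneg (a - b)]

/-- The resolvent is determined: if `lam⁻¹ • (u - p) ∈ A p` then `J u = p`. -/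
lemma resolvent_unique {A : H → Set H} (hA : MonotoneOp A) {lam : ℝ} (hlam : 0 < lam)
    {J : H → H} (hJ : IsResolvent A lam J) {u p : H}
    (hp : lam⁻¹ • (u - p) ∈ A p) : J u = p := by
  have h := hA (hJ u) hp
  rw [← smul_sub, real_inner_smul_left] at h
  have hinv : (0:ℝ) < lam⁻¹ := inv_pos.2 hlam
  have h2 : 0 ≤ ⟪u - J u - (u - p), J u - p⟫ := by nlinarith [h, hinv]
  have hrw : u - J u - (u - p) = -(J u - p) := by abel
  rw [hrw, inner_neg_left] at h2
  have h3 : ⟪J u - p, J u - p⟫ ≤ 0 := by linarith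
  have := real_inner_self_nonneg (x := J u - p)
  have h4 : ⟪J u - p, J u - p⟫ = 0 := le_antisymm h3 this
  have := inner_self_eq_zero (𝕜 := ℝ) (x := J u - p) |>.mp h4
  rwa [sub_eq_zero] at this

/-- Bound on the displacement of the resolvent via a zero of `A`. -/
lemma resolvent_displacement {A : H → Set H} (hA : MonotoneOp A) {lam : ℝ} (hlam : 0 < lam)
    {J : H → H} (hJ : IsResolvent A lam J) {z : H} (hz : (0:H) ∈ A z) (x : H) :
    ‖x - J x‖ ≤ ‖x - z‖ := by
  have h := hA (hJ x) hz
  rw [sub_zero, real_inner_smul_left] at h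
  have hinv : (0:ℝ) < lam⁻¹ := inv_pos.2 hlam
  have h2 : 0 ≤ ⟪x - J x, J x - z⟫ := by nlinarith [h, hinv]
  have h3 : ⟪x - J x, x - J x⟫ ≤ ⟪x - J x, x - z⟫ := by
    have hrw : x - z = (x - J x) + (J x - z) := by abel
    rw [hrw, inner_add_right]; linarith
  have h4 : ‖x - J x‖ ^ 2 ≤ ‖x - z‖ * ‖x - J x‖ := by
    calc ‖x - J x‖ ^ 2 = ⟪x - J x, x - J x⟫ := (real_inner_self_eq_norm_sq _).symm
      _ ≤ ⟪x - J x, x - z⟫ := h3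
      _ ≤ ‖x - J x‖ * ‖x - z‖ := real_inner_le_norm _ _
      _ = ‖x - z‖ * ‖x - J x‖ := mul_comm _ _
  nlinarith [norm_nonneg (x - J x), norm_nonneg (x - z)]

/-- Variation of `gam ↦ gam A_gam x`: for `gam, del > 0`, `x, y ∈ H` and any
zero `z` of `A`, `‖gam A_gam x - del A_del y‖ ≤ 2‖x - y‖ + 2‖x - z‖ |gam - del|/gam`. -/
theorem yosida_variation (A : H → Set H) (hA : MaximallyMonotone A)
    (gam del : ℝ) (hgam : 0 < gam) (hdel : 0 < del)
    (Jg Jd : H → H) (hJg : IsResolvent A gam Jg) (hJd : IsResolvent A del Jd)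
    (x y z : H) (hz : (0 : H) ∈ A z) :
    ‖gam • (gam⁻¹ • (x - Jg x)) - del • (del⁻¹ • (y - Jd y))‖ ≤
      2 * ‖x - y‖ + 2 * ‖x - z‖ * (|gam - del| / gam) := by
  obtain ⟨hmono, -⟩ := hA
  have hg : gam • (gam⁻¹ • (x - Jg x)) = x - Jg x := by
    rw [smul_smul, mul_inv_cancel₀ hgam.ne', one_smul]
  have hd : del • (del⁻¹ • (y - Jd y)) = y - Jd y := by
    rw [smul_smul, mul_inv_cancel₀ hdel.ne', one_smul]
  rw [hg, hd]
  -- resolvent identity: Jd u = Jg x for u = Jg x + (del/gam) • (x - Jg x)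
  set u : H := Jg x + (del / gam) • (x - Jg x) with hu
  have hmem : del⁻¹ • (u - Jg x) ∈ A (Jg x) := by
    have : del⁻¹ • (u - Jg x) = gam⁻¹ • (x - Jg x) := by
      rw [hu, add_sub_cancel_left, smul_smul]
      congr 1
      field_simp
    rw [this]; exact hJg x
  have hJdu : Jd u = Jg x := resolvent_unique hmono hdel hJd hmem
  have h1 : ‖Jg x - Jd x‖ ≤ (|gam - del| / gam) * ‖x - z‖ := by
    have := resolvent_nonexp hmono hdel hJd u x
    rw [hJdu] at this
    have hux : ‖u - x‖ = (|gam - del| / gam) * ‖x - Jg x‖ := by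
      have : u - x = (del / gam - 1) • (x - Jg x) := by
        rw [hu]; rw [sub_smul, one_smul]; abel
      rw [this, norm_smul, Real.norm_eq_abs]
      congr 1
      rw [div_sub_one hgam.ne', abs_div, abs_of_pos hgam, abs_sub_comm]
    have hdisp : ‖x - Jg x‖ ≤ ‖x - z‖ := resolvent_displacement hmono hgam hJg hz x
    calc ‖Jg x - Jd x‖ ≤ ‖u - x‖ := this
      _ = (|gam - del| / gam) * ‖x - Jg x‖ := hux
      _ ≤ (|gam - del| / gam) * ‖x - z‖ := by
          apply mul_le_mul_of_nonneg_left hdisp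
          positivity
  have h2 : ‖Jd x - Jd y‖ ≤ ‖x - y‖ := resolvent_nonexp hmono hdel hJd x y
  have h3 : ‖x - Jg x - (y - Jd y)‖ ≤ ‖x - y‖ + ‖Jg x - Jd x‖ + ‖Jd x - Jd y‖ := by
    have : x - Jg x - (y - Jd y) = (x - y) - (Jg x - Jd x) - (Jd x - Jd y) := by abel
    rw [this]
    calc ‖(x - y) - (Jg x - Jd x) - (Jd x - Jd y)‖
        ≤ ‖(x - y) - (Jg x - Jd x)‖ + ‖Jd x - Jd y‖ := norm_sub_le _ _
      _ ≤ ‖x - y‖ + ‖Jg x - Jd x‖ + ‖Jd x - Jd y‖ := by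
          have := norm_sub_le (x - y) (Jg x - Jd x); linarith
  have hnn : 0 ≤ ‖x - z‖ * (|gam - del| / gam) := by positivity
  calc ‖x - Jg x - (y - Jd y)‖ ≤ ‖x - y‖ + ‖Jg x - Jd x‖ + ‖Jd x - Jd y‖ := h3
    _ ≤ ‖x - y‖ + (|gam - del| / gam) * ‖x - z‖ + ‖x - y‖ := by linarith
    _ ≤ 2 * ‖x - y‖ + 2 * ‖x - z‖ * (|gam - del| / gam) := by
        rw [mul_comm (|gam - del| / gam)]
        nlinarith [hnn]
end

section
/- Let w, η : [t₀, ∞) → [0, ∞) be absolutely continuous functions such that η is not integrable on [t₀, ∞), the product w·η is integrable on [t₀, ∞), and |w'(t)| ≤ η(t) for almost every t > t₀. Then lim_{t→∞} w(t) = 0. -/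
open MeasureTheory Filter Set

/-- The primitive of a locally interval-integrable function is continuous on `Ici a`. -/
lemma primCont_aux {f : ℝ → ℝ} {a : ℝ}
    (h : ∀ t, a ≤ t → IntervalIntegrable f volume a t) :
    ContinuousOn (fun x => ∫ s in a..x, f s) (Ici a) := by
  intro u hu
  have hu' : a ≤ u := hu
  have h1 : ContinuousOn (fun x => ∫ s in a..x, f s) (Set.uIcc a (u + 1)) :=
    intervalIntegral.continuousOn_primitive_interval' (h (u + 1) (by linarith))
      Set.left_mem_uIcc
  have hIcc : Set.uIcc a (u + 1) = Set.Icc a (u + 1) := Set.uIcc_of_le (by linarith)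
  rw [hIcc] at h1
  have hmem : Set.Icc a (u + 1) ∈ nhdsWithin u (Set.Ici a) := by
    rw [← Set.Ici_inter_Iic]
    exact Filter.inter_mem self_mem_nhdsWithin
      (mem_nhdsWithin_of_mem_nhds (Iic_mem_nhds (by linarith)))
  exact (h1 u ⟨hu', by linarith⟩).mono_of_mem_nhdsWithin hmem

/-- If `w, η : [t₀,∞) → [0,∞)` are absolutely continuous (encoded via the
fundamental theorem of calculus with locally integrable derivatives),
`η ∉ L¹(t₀,∞)`, `w·η ∈ L¹(t₀,∞)` and `|w'(t)| ≤ η(t)` a.e., then `w(t) → 0`. -/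
theorem decay_of_integrability (t₀ : ℝ) (w η w' η' : ℝ → ℝ)
    (hw0 : ∀ t, t₀ ≤ t → 0 ≤ w t) (hη0 : ∀ t, t₀ ≤ t → 0 ≤ η t)
    -- absolute continuity of `w` on `[t₀,∞)`
    (hw'int : ∀ t, t₀ ≤ t → IntervalIntegrable w' volume t₀ t)
    (hwFTC : ∀ t, t₀ ≤ t → w t = w t₀ + ∫ s in t₀..t, w' s)
    -- absolute continuity of `η` on `[t₀,∞)`
    (hη'int : ∀ t, t₀ ≤ t → IntervalIntegrable η' volume t₀ t)
    (hηFTC : ∀ t, t₀ ≤ t → η t = η t₀ + ∫ s in t₀..t, η' s)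
    -- `η` is not integrable on `[t₀,∞)`
    (hηnotL1 : ¬ IntegrableOn η (Ici t₀) volume)
    -- `w·η` is integrable on `[t₀,∞)`
    (hprod : IntegrableOn (fun t => w t * η t) (Ici t₀) volume)
    -- `|w'(t)| ≤ η(t)` for a.e. `t > t₀`
    (hbound : ∀ᵐ t ∂(volume.restrict (Ioi t₀)), |w' t| ≤ η t) :
    Tendsto w atTop (nhds 0) := by
  -- η is continuous on [t₀, ∞)
  have hηcont : ContinuousOn η (Ici t₀) := by
    have h1 : ContinuousOn (fun t => η t₀ + ∫ s in t₀..t, η' s) (Ici t₀) :=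
      continuousOn_const.add (primCont_aux hη'int)
    exact h1.congr fun t ht => hηFTC t ht
  -- η is interval integrable on subintervals of [t₀, ∞)
  have hηII : ∀ a b, t₀ ≤ a → t₀ ≤ b → IntervalIntegrable η volume a b := by
    intro a b ha hb
    apply (hηcont.mono ?_).intervalIntegrable
    intro x hx
    exact le_trans (le_min ha hb) hx.1
  set H : ℝ → ℝ := fun t => ∫ s in t₀..t, η s with hHdef
  have hHadd : ∀ a b, t₀ ≤ a → a ≤ b → H b - H a = ∫ s in a..b, η s := by
    intro a b ha hab
    have h := intervalIntegral.integral_add_adjacent_intervals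
      (hηII t₀ a le_rfl ha) (hηII a b ha (ha.trans hab))
    simp only [hHdef]
    linarith
  have hHmono : ∀ a b, t₀ ≤ a → a ≤ b → H a ≤ H b := by
    intro a b ha hab
    have h1 : 0 ≤ ∫ s in a..b, η s :=
      intervalIntegral.integral_nonneg hab (fun u hu => hη0 u (ha.trans hu.1))
    linarith [hHadd a b ha hab]
  have hHcont : ContinuousOn H (Ici t₀) := primCont_aux (fun t ht => hηII t₀ t le_rfl ht)
  -- H is unbounded
  have hHunb : ∀ c : ℝ, ∃ t, t₀ ≤ t ∧ c ≤ H t := by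
    by_contra hcon
    push_neg at hcon
    obtain ⟨c, hc⟩ := hcon
    apply hηnotL1
    have hIoi : IntegrableOn η (Ioi t₀) volume := by
      apply integrableOn_Ioi_of_intervalIntegral_norm_bounded c t₀
        (b := fun i : ℝ => i) (l := atTop) ?_ tendsto_id
      · filter_upwards [eventually_ge_atTop t₀] with i hi
        have heq : (∫ x in t₀..i, ‖η x‖) = ∫ x in t₀..i, η x := by
          apply intervalIntegral.integral_congr
          intro x hx
          rw [Set.uIcc_of_le hi] at hx
          simp only [Real.norm_eq_abs]
          exact abs_of_nonneg (hη0 x hx.1)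
        rw [heq]
        exact (hc i hi).le
      · intro i
        by_cases h : t₀ ≤ i
        · exact (hηII t₀ i le_rfl h).1
        · rw [Set.Ioc_eq_empty (by intro hlt; exact h hlt.le)]
          exact integrableOn_empty
    rw [integrableOn_Ici_iff_integrableOn_Ioi]
    exact hIoi
  -- Lipschitz-type bound on w
  have hwLip : ∀ a b, t₀ ≤ a → a ≤ b → |w b - w a| ≤ H b - H a := by
    intro a b ha hab
    have hb0 : t₀ ≤ b := ha.trans hab
    have hw'ab : IntervalIntegrable w' volume a b := (hw'int a ha).symm.trans (hw'int b hb0)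
    have hwab : w b - w a = ∫ s in a..b, w' s := by
      have h1 := hwFTC a ha
      have h2 := hwFTC b hb0
      have h3 := intervalIntegral.integral_add_adjacent_intervals (hw'int a ha) hw'ab
      linarith
    rw [hwab, hHadd a b ha hab]
    calc |∫ s in a..b, w' s| ≤ ∫ s in a..b, |w' s| := by
          simpa [Real.norm_eq_abs] using intervalIntegral.norm_integral_le_integral_norm
            (f := w') (μ := volume) hab
      _ ≤ ∫ s in a..b, η s := by
          rw [intervalIntegral.integral_of_le hab, intervalIntegral.integral_of_le hab]
          apply setIntegral_mono_ae_restrict hw'ab.abs.1 (hηII a b ha hb0).1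
          exact ae_restrict_of_ae_restrict_of_subset
            (fun x hx => lt_of_le_of_lt ha hx.1) hbound
  -- The primitive of w·η
  have hprodIoi : IntegrableOn (fun t => w t * η t) (Ioi t₀) volume :=
    hprod.mono_set Ioi_subset_Ici_self
  set L := ∫ t in Ioi t₀, w t * η t with hLdef
  set F : ℝ → ℝ := fun t => ∫ s in t₀..t, w s * η s with hFdef
  have hFtend : Tendsto F atTop (nhds L) :=
    intervalIntegral_tendsto_integral_Ioi t₀ hprodIoi tendsto_id
  have hprodII : ∀ a b, t₀ ≤ a → t₀ ≤ b →
      IntervalIntegrable (fun t => w t * η t) volume a b := by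
    intro a b ha hb
    constructor
    · exact hprod.mono_set (fun x hx => ha.trans hx.1.le)
    · exact hprod.mono_set (fun x hx => hb.trans hx.1.le)
  have hFadd : ∀ a b, t₀ ≤ a → a ≤ b → F b - F a = ∫ s in a..b, w s * η s := by
    intro a b ha hab
    have h := intervalIntegral.integral_add_adjacent_intervals
      (hprodII t₀ a le_rfl ha) (hprodII a b ha (ha.trans hab))
    simp only [hFdef]
    linarith
  have hFmono : ∀ a b, t₀ ≤ a → a ≤ b → F a ≤ F b := by
    intro a b ha hab
    have h1 : 0 ≤ ∫ s in a..b, w s * η s :=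
      intervalIntegral.integral_nonneg hab
        (fun u hu => mul_nonneg (hw0 u (ha.trans hu.1)) (hη0 u (ha.trans hu.1)))
    linarith [hFadd a b ha hab]
  have hFleL : ∀ a, t₀ ≤ a → F a ≤ L := by
    intro a ha
    apply ge_of_tendsto hFtend
    filter_upwards [eventually_ge_atTop a] with t ht
    exact hFmono a t ha ht
  -- Main argument
  rw [Metric.tendsto_atTop]
  by_contra hcon
  push_neg at hcon
  obtain ⟨ε, hε, hfreq⟩ := hcon
  have htail : ∀ᶠ t in atTop, L - F t < ε ^ 2 / 4 := by
    filter_upwards [hFtend.eventually (eventually_gt_nhds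
      (show L - ε ^ 2 / 4 < L by nlinarith))] with t ht
    linarith
  obtain ⟨T, hT⟩ := eventually_atTop.mp (htail.and (eventually_ge_atTop t₀))
  obtain ⟨t, htT, hwt⟩ := hfreq T
  have ht0 : t₀ ≤ t := (hT t htT).2
  have hwtε : ε ≤ w t := by
    rwa [Real.dist_eq, sub_zero, abs_of_nonneg (hw0 t ht0)] at hwt
  obtain ⟨X, hX0, hXc⟩ := hHunb (H t + ε / 2)
  set X' := max X t with hX'def
  have hX't : t ≤ X' := le_max_right X t
  have hX'H : H t + ε / 2 ≤ H X' := le_trans hXc (hHmono X X' hX0 (le_max_left X t))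
  obtain ⟨t', ht'mem, hHt'⟩ : ∃ t' ∈ Icc t X', H t' = H t + ε / 2 := by
    have hcont' : ContinuousOn H (Icc t X') :=
      hHcont.mono (fun x hx => ht0.trans hx.1)
    exact intermediate_value_Icc hX't hcont' ⟨by linarith, hX'H⟩
  have htt' : t ≤ t' := ht'mem.1
  have ht'0 : t₀ ≤ t' := ht0.trans htt'
  -- lower bound on w on (t, t']
  have hwlow : ∀ s ∈ Ioc t t', ε / 2 ≤ w s := by
    intro s hs
    have h1 := hwLip t s ht0 hs.1.le
    have h2 : H s ≤ H t' := hHmono s t' (ht0.trans hs.1.le) hs.2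
    have h3 := abs_le.mp h1
    linarith [h3.1]
  have hηint_tt' : (∫ s in Ioc t t', η s) = ε / 2 := by
    have h := hHadd t t' ht0 htt'
    rw [intervalIntegral.integral_of_le htt'] at h
    linarith
  have hIOc : (∫ s in Ioc t t', (ε / 2) * η s) ≤ ∫ s in Ioc t t', w s * η s := by
    apply setIntegral_mono_on
    · exact ((hηII t t' ht0 ht'0).1).const_mul (ε / 2)
    · exact hprod.mono_set (fun x hx => ht0.trans hx.1.le)
    · exact measurableSet_Ioc
    · intro s hs
      exact mul_le_mul_of_nonneg_right (hwlow s hs) (hη0 s (ht0.trans hs.1.le))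
  have hlow : ε ^ 2 / 4 ≤ F t' - F t := by
    rw [hFadd t t' ht0 htt', intervalIntegral.integral_of_le htt']
    calc ε ^ 2 / 4 = (ε / 2) * (ε / 2) := by ring
      _ = ∫ s in Ioc t t', (ε / 2) * η s := by
          rw [MeasureTheory.integral_const_mul, hηint_tt']
      _ ≤ _ := hIOc
  have h1 := (hT t htT).1
  have h2 : F t' ≤ L := hFleL t' ht'0
  have h3 : F t ≤ F t' := hFmono t t' ht0 htt'
  linarith
end

section
/- Let α > 1 and let (h_k) be a sequence of real numbers bounded from below such that (h_{k+1} − h_k) − (1 − α/k)(h_k − h_{k-1}) + ω_k ≤ θ_k for all k ≥ 1, where (ω_k) and (θ_k) are nonnegative sequences with ∑_k k θ_k < ∞. Then ∑_k [h_k − h_{k-1}]₊ < ∞ and ∑_k k ω_k < ∞. -/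
open Finset Filter

/-- Summability lemma for real sequences: if `(h_k)` is bounded from below,
`(ω_k)`, `(θ_k)` are nonnegative with `∑ k θ_k < ∞`, and
`(h_{k+1} - h_k) - (1 - α/k)(h_k - h_{k-1}) + ω_k ≤ θ_k` for all `k ≥ 1`
with `α > 1`, then `∑ [h_k - h_{k-1}]₊ < ∞` and `∑ k ω_k < ∞`. -/
theorem summability_lemma (α : ℝ) (hα : 1 < α) (h ω θ : ℕ → ℝ)
    (hbdd : ∃ B, ∀ k, B ≤ h k)
    (hω : ∀ k, 0 ≤ ω k) (hθ : ∀ k, 0 ≤ θ k)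
    (hθsum : Summable (fun k : ℕ => (k : ℝ) * θ k))
    (hineq : ∀ k, 1 ≤ k →
      (h (k + 1) - h k) - (1 - α / (k : ℝ)) * (h k - h (k - 1)) + ω k ≤ θ k) :
    Summable (fun k => max (h k - h (k - 1)) 0) ∧
      Summable (fun k : ℕ => (k : ℝ) * ω k) := by
  obtain ⟨B, hB⟩ := hbdd
  have hα0 : (0:ℝ) < α - 1 := by linarith
  set Sθ := ∑' k : ℕ, (k:ℝ) * θ k with hSθdef
  have hkθ : ∀ k : ℕ, 0 ≤ (k:ℝ) * θ k := fun k => mul_nonneg (Nat.cast_nonneg k) (hθ k)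
  have hkω : ∀ k : ℕ, 0 ≤ (k:ℝ) * ω k := fun k => mul_nonneg (Nat.cast_nonneg k) (hω k)
  have hpartθ : ∀ s : Finset ℕ, ∑ k ∈ s, (k:ℝ) * θ k ≤ Sθ := fun s =>
    Summable.sum_le_tsum s (fun k _ => hkθ k) hθsum
  have hSθ0 : 0 ≤ Sθ := tsum_nonneg hkθ
  set p : ℕ → ℝ := fun k => max (h k - h (k - 1)) 0 with hpdef
  have hp0 : ∀ k, 0 ≤ p k := fun k => le_max_right _ _
  -- ## Part 1
  set k0 : ℕ := ⌈α⌉₊ with hk0def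
  have hk02 : 2 ≤ k0 := by
    have : 1 < ⌈α⌉₊ := by
      rw [Nat.lt_ceil]; exact_mod_cast hα
    omega
  have hstep1 : ∀ k, k0 ≤ k → (k:ℝ) * p (k+1) ≤ ((k:ℝ) - α) * p k + (k:ℝ) * θ k := by
    intro k hk
    have hk1 : 1 ≤ k := by omega
    have hαk : α ≤ (k:ℝ) := le_trans (Nat.le_ceil α) (by exact_mod_cast hk)
    have hkpos : (0:ℝ) < k := by
      have : (0:ℕ) < k := by omega
      exact_mod_cast this
    have hcoef : 0 ≤ 1 - α/(k:ℝ) := by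
      rw [sub_nonneg, div_le_one hkpos]; exact hαk
    have hmain := hineq k hk1
    have h2 : h (k+1) - h k ≤ (1 - α/(k:ℝ)) * p k + θ k := by
      have hm : (1 - α/(k:ℝ)) * (h k - h (k-1)) ≤ (1 - α/(k:ℝ)) * p k :=
        mul_le_mul_of_nonneg_left (le_max_left _ _) hcoef
      have := hω k
      linarith
    have hp1 : p (k+1) ≤ (1 - α/(k:ℝ)) * p k + θ k := by
      have hrhs : 0 ≤ (1 - α/(k:ℝ)) * p k + θ k :=
        add_nonneg (mul_nonneg hcoef (hp0 k)) (hθ k)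
      have hidx : (k+1) - 1 = k := by omega
      have hpe : p (k+1) = max (h (k+1) - h k) 0 := by
        simp only [hpdef, hidx]
      rw [hpe]
      exact max_le h2 hrhs
    have hmul := mul_le_mul_of_nonneg_left hp1 (le_of_lt hkpos)
    have e : (k:ℝ) * ((1 - α/(k:ℝ)) * p k + θ k) = ((k:ℝ) - α) * p k + (k:ℝ) * θ k := by
      field_simp
    linarith
  have Q : ∀ m : ℕ, (α-1) * ∑ i ∈ range (m+1), p (k0+i)
      + ((k0+m:ℕ):ℝ) * p (k0+m+1)
      ≤ ((k0:ℝ)-1) * p k0 + ∑ i ∈ range (m+1), ((k0+i:ℕ):ℝ) * θ (k0+i) := by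
    intro m
    induction m with
    | zero =>
      have hs := hstep1 k0 le_rfl
      simp only [Nat.zero_add, sum_range_one, Nat.add_zero]
      linarith
    | succ m ih =>
      have hs := hstep1 (k0+m+1) (by omega)
      rw [sum_range_succ (fun i => p (k0 + i)) (m+1),
        sum_range_succ (fun i => ((k0 + i : ℕ) : ℝ) * θ (k0 + i)) (m+1)]
      have e1 : k0 + (m+1) = k0 + m + 1 := by omega
      simp only [e1]
      push_cast at hs ih ⊢
      nlinarith [hp0 (k0+m+1)]
  have hsum1 : Summable p := by
    rw [← summable_nat_add_iff k0]
    apply summable_of_sum_range_le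
      (c := (((k0:ℝ)-1) * p k0 + Sθ)/(α-1)) (fun n => hp0 _)
    intro n
    rw [le_div_iff₀ hα0]
    match n with
    | 0 =>
      simp only [range_zero, sum_empty, zero_mul]
      have : 0 ≤ ((k0:ℝ)-1) * p k0 := by
        apply mul_nonneg _ (hp0 k0)
        have : (2:ℝ) ≤ (k0:ℝ) := by exact_mod_cast hk02
        linarith
      linarith
    | (m+1) =>
      have hQ := Q m
      have hθb : ∑ i ∈ range (m+1), ((k0+i:ℕ):ℝ) * θ (k0+i) ≤ Sθ := by
        have e : ∑ k ∈ Ico k0 (k0+(m+1)), (k:ℝ) * θ k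
            = ∑ i ∈ range (m+1), ((k0+i:ℕ):ℝ) * θ (k0+i) := by
          rw [Finset.sum_Ico_eq_sum_range]
          have e2 : k0 + (m+1) - k0 = m+1 := by omega
          rw [e2]
        rw [← e]
        exact hpartθ _
      have hpsum : ∑ i ∈ range (m+1), p (i + k0) = ∑ i ∈ range (m+1), p (k0 + i) := by
        apply sum_congr rfl
        intro i _
        rw [add_comm]
      rw [hpsum, mul_comm]
      have hnn : 0 ≤ ((k0+m:ℕ):ℝ) * p (k0+m+1) :=
        mul_nonneg (Nat.cast_nonneg _) (hp0 _)
      linarith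
  -- ## Part 2
  have P : ∀ K : ℕ, ∑ k ∈ range (K+1), (k:ℝ) * ω k
      ≤ ∑ k ∈ range (K+1), (k:ℝ) * θ k + (K:ℝ) * (h K - h (K+1)) + (α-1) * (h 0 - h K) := by
    intro K
    induction K with
    | zero => simp
    | succ K ih =>
      have hmain := hineq (K+1) (by omega)
      have hidx : (K+1) - 1 = K := by omega
      rw [hidx] at hmain
      push_cast at hmain
      have hKpos : (0:ℝ) < (K:ℝ)+1 := by positivity
      have hKne : (K:ℝ)+1 ≠ 0 := ne_of_gt hKpos
      have e1 : ((K:ℝ)+1) * ((1 - α/((K:ℝ)+1)) * (h (K+1) - h K))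
          = ((K:ℝ)+1-α) * (h (K+1) - h K) := by
        field_simp
      have hm2 : ((K:ℝ)+1) * (h (K+1+1) - h (K+1)) - ((K:ℝ)+1-α) * (h (K+1) - h K)
          + ((K:ℝ)+1) * ω (K+1) ≤ ((K:ℝ)+1) * θ (K+1) := by
        have := mul_le_mul_of_nonneg_left hmain (le_of_lt hKpos)
        nlinarith [this, e1]
      rw [sum_range_succ (fun k => (k:ℝ) * ω k) (K+1),
        sum_range_succ (fun k => (k:ℝ) * θ k) (K+1)]
      push_cast
      push_cast at ih
      linarith
  have hsub : ∀ N : ℕ, ∃ K, N ≤ K ∧ (K:ℝ) * (h K - h (K+1)) ≤ 1 := by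
    by_contra hcon
    push_neg at hcon
    obtain ⟨N, hN⟩ := hcon
    have hstep : ∀ K, N + 1 ≤ K → h (K+1) < h K - 1/(K:ℝ) := by
      intro K hK
      have hKpos : (0:ℝ) < K := by
        have : (0:ℕ) < K := by omega
        exact_mod_cast this
      have h1 := hN K (by omega)
      have h2 : 1/(K:ℝ) < h K - h (K+1) := (div_lt_iff₀' hKpos).mpr h1
      linarith
    have hiter : ∀ m : ℕ, h (N+1+m) ≤ h (N+1) - ∑ i ∈ range m, 1/((N+1+i:ℕ):ℝ) := by
      intro m
      induction m with
      | zero => simp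
      | succ m ih =>
        have hs := hstep (N+1+m) (by omega)
        have e : N+1+(m+1) = (N+1+m)+1 := by omega
        rw [e, sum_range_succ]
        linarith
    have hns : ¬ Summable (fun i : ℕ => 1/((N+1+i:ℕ):ℝ)) := by
      intro hs
      have hs2 : Summable (fun i : ℕ => 1/((i+(N+1):ℕ):ℝ)) := by
        have : (fun i : ℕ => 1/((i+(N+1):ℕ):ℝ)) = (fun i : ℕ => 1/((N+1+i:ℕ):ℝ)) := by
          funext i; rw [add_comm]
        rw [this]; exact hs
      have := (summable_nat_add_iff (f := fun j : ℕ => 1/(j:ℝ)) (N+1)).mp hs2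
      exact Real.not_summable_one_div_natCast this
    have hdiv : Tendsto (fun m => ∑ i ∈ range m, 1/((N+1+i:ℕ):ℝ)) atTop atTop :=
      (not_summable_iff_tendsto_nat_atTop_of_nonneg (fun i => by positivity)).mp hns
    obtain ⟨m, hm⟩ := (hdiv.eventually_ge_atTop (h (N+1) - B + 1)).exists
    have hb := hB (N+1+m)
    have hx := hiter m
    linarith
  refine ⟨hsum1, ?_⟩
  apply summable_of_sum_range_le (c := Sθ + 1 + (α-1)*(h 0 - B)) hkω
  intro n
  obtain ⟨K, hKn, hK1⟩ := hsub n
  have h1 : ∑ k ∈ range n, (k:ℝ)*ω k ≤ ∑ k ∈ range (K+1), (k:ℝ)*ω k := by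
    apply sum_le_sum_of_subset_of_nonneg
    · apply range_subset_range.mpr; omega
    · intro k _ _; exact hkω k
  have h2 := P K
  have h3 := hpartθ (range (K+1))
  have h4 := hB K
  have h5 : (α-1)*(h 0 - h K) ≤ (α-1)*(h 0 - B) := by nlinarith
  linarith
end

section
/- Let c ≥ 0 and let (a_k) and (β_j) be nonnegative real sequences with (β_j) summable and a_k² ≤ c² + ∑_{j=1}^k β_j a_j for all k ∈ ℕ. Then a_k ≤ c + ∑_{j=1}^∞ β_j for all k ∈ ℕ. -/
/-!
Let `A = a m` be the largest of `a 0, …, a k`. Bounding every `a j` with `j ≤ m` by `A` in the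
hypothesis at `m` gives `A² ≤ c² + B A` with `B = ∑' j, β j`, and a number above `c + B` violates
this quadratic inequality.
-/

namespace Gronwall

theorem le_add_of_sq_le_sq_add_mul {x c B : ℝ} (hc : 0 ≤ c) (hB : 0 ≤ B)
    (h : x ^ 2 ≤ c ^ 2 + B * x) : x ≤ c + B := by
  by_contra! hx
  nlinarith

theorem sum_mul_le_tsum_mul {ι : Type*} {β a : ι → ℝ} {A : ℝ} (s : Finset ι)
    (hβ : ∀ j, 0 ≤ β j) (hβsum : Summable β) (hA : 0 ≤ A) (ha : ∀ j ∈ s, a j ≤ A) :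
    ∑ j ∈ s, β j * a j ≤ (∑' j, β j) * A :=
  calc ∑ j ∈ s, β j * a j ≤ ∑ j ∈ s, β j * A :=
        Finset.sum_le_sum fun j hj => mul_le_mul_of_nonneg_left (ha j hj) (hβ j)
    _ = (∑ j ∈ s, β j) * A := (Finset.sum_mul ..).symm
    _ ≤ (∑' j, β j) * A :=
        mul_le_mul_of_nonneg_right (hβsum.sum_le_tsum s fun j _ => hβ j) hA

theorem discrete_gronwall_general (c : ℝ) (hc : 0 ≤ c) (a β : ℕ → ℝ)
    (hβ : ∀ j, 0 ≤ β j) (hβsum : Summable β)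
    (hineq : ∀ k, (a k) ^ 2 ≤ c ^ 2 + ∑ j ∈ Finset.Icc 1 k, β j * a j) :
    ∀ k, a k ≤ c + ∑' j, β j := by
  intro k
  have hB : 0 ≤ ∑' j, β j := tsum_nonneg hβ
  obtain ⟨m, hm, hmax⟩ := (Finset.range (k + 1)).exists_max_image a
    ⟨k, Finset.self_mem_range_succ k⟩
  have hmk : m ≤ k := Nat.lt_succ_iff.mp (Finset.mem_range.mp hm)
  have hak : a k ≤ a m := hmax k (Finset.self_mem_range_succ k)
  rcases le_or_gt (a m) 0 with ham | ham
  · linarith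
  have hbound : ∑ j ∈ Finset.Icc 1 m, β j * a j ≤ (∑' j, β j) * a m :=
    sum_mul_le_tsum_mul _ hβ hβsum ham.le fun j hj =>
      hmax j (Finset.mem_range.mpr (by grind))
  exact hak.trans (le_add_of_sq_le_sq_add_mul hc hB ((hineq m).trans (by linarith)))

/-- Discrete Gronwall lemma: if `c ≥ 0`, `(a_k)`, `(β_j)` are nonnegative,
`(β_j)` is summable, and `a_k² ≤ c² + ∑_{j=1}^k β_j a_j` for all `k`,
then `a_k ≤ c + ∑_{j} β_j` for all `k`. -/
theorem discrete_gronwall (c : ℝ) (hc : 0 ≤ c) (a β : ℕ → ℝ)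
    (ha : ∀ k, 0 ≤ a k) (hβ : ∀ j, 0 ≤ β j) (hβsum : Summable β)
    (hineq : ∀ k, (a k) ^ 2 ≤ c ^ 2 + ∑ j ∈ Finset.Icc 1 k, β j * a j) :
    ∀ k, a k ≤ c + ∑' j, β j :=
  discrete_gronwall_general c hc a β hβ hβsum hineq

end Gronwall
end

section
/- Under the hypotheses of the anchoring lemma and assuming additionally λ(t) α²/t² ≥ 1 + ε for some ε > 0 and all t ≥ t₀, the function h_z(t) = ½‖x(t) − z‖² satisfies ḧ_z(t) + (α/t) ḣ_z(t) + ε‖ẋ(t)‖² + (α λ(t)/t) (d/dt)‖ẋ(t)‖² + λ(t)‖ẍ(t)‖² ≤ 0 for all t ≥ t₀. -/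
open scoped RealInnerProductSpace

variable {H : Type*} [NormedAddCommGroup H] [InnerProductSpace ℝ H] [CompleteSpace H]

open Set

/-- Refined anchor inequality: if moreover `λ(t) α²/t² ≥ 1 + ε` for some
`ε > 0`, then
`ḧ_z(t) + (α/t) ḣ_z(t) + ε‖ẋ(t)‖² + (α λ(t)/t)(d/dt)‖ẋ(t)‖² + λ(t)‖ẍ(t)‖² ≤ 0`. -/
theorem anchor_inequality_refined (A : H → Set H) (hA : MaximallyMonotone A)
    (t₀ α ε : ℝ) (ht₀ : 0 < t₀) (hα : 0 < α) (hε : 0 < ε)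
    (lam : ℝ → ℝ) (hlam : ∀ t, t₀ ≤ t → 0 < lam t)
    (hlamc : ContinuousOn lam (Ici t₀))
    (hgrow : ∀ t, t₀ ≤ t → 1 + ε ≤ lam t * α ^ 2 / t ^ 2)
    (J : ℝ → H → H) (hJ : ∀ l : ℝ, 0 < l → IsResolvent A l (J l))
    (x x' x'' : ℝ → H)
    (hx : ∀ t, t₀ ≤ t → HasDerivAt x (x' t) t)
    (hx' : ∀ t, t₀ ≤ t → HasDerivAt x' (x'' t) t)
    (hode : ∀ t, t₀ ≤ t →
      x'' t + (α / t) • x' t + (lam t)⁻¹ • (x t - J (lam t) (x t)) = 0)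
    (z : H) (hz : (0 : H) ∈ A z)
    (hz' hz'' g' : ℝ → ℝ)
    (hd1 : ∀ t, t₀ ≤ t → HasDerivAt (fun s => (1 / 2) * ‖x s - z‖ ^ 2) (hz' t) t)
    (hd2 : ∀ t, t₀ ≤ t → HasDerivAt hz' (hz'' t) t)
    (hg : ∀ t, t₀ ≤ t → HasDerivAt (fun s => ‖x' s‖ ^ 2) (g' t) t) :
    ∀ t, t₀ ≤ t →
      hz'' t + (α / t) * hz' t + ε * ‖x' t‖ ^ 2 +
        (α * lam t / t) * g' t + lam t * ‖x'' t‖ ^ 2 ≤ 0 := by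
  intro t ht
  have htpos : 0 < t := lt_of_lt_of_le ht₀ ht
  set L := lam t with hLdef
  have hL : 0 < L := hlam t ht
  set p := J L (x t) with hpdef
  have hvA : L⁻¹ • (x t - p) ∈ A p := hJ L hL (x t)
  set v := L⁻¹ • (x t - p) with hvdef
  have hxp : x t - p = L • v := by
    rw [hvdef, smul_smul, mul_inv_cancel₀ hL.ne', one_smul]
  have hmono : 0 ≤ ⟪v - 0, p - z⟫ := hA.1 hvA hz
  have hmono' : L * ‖v‖ ^ 2 ≤ ⟪v, x t - z⟫ := by
    have hpz : p - z = (x t - z) - L • v := by rw [← hxp]; abel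
    rw [sub_zero, hpz, inner_sub_right, real_inner_smul_right,
      real_inner_self_eq_norm_sq] at hmono
    linarith
  -- ODE rearrangement
  have hv2 : v = -(x'' t + (α / t) • x' t) := by
    have h := hode t ht
    rw [← hLdef, ← hpdef, ← hvdef] at h
    have h2 : v + (x'' t + (α / t) • x' t) = 0 := by rw [← h]; abel
    exact eq_neg_of_add_eq_zero_left h2
  -- first derivative identity
  have key1 : ∀ s, t₀ ≤ s → hz' s = ⟪x' s, x s - z⟫ := by
    intro s hs
    have hxs : HasDerivAt (fun u => x u - z) (x' s) s := (hx s hs).sub_const z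
    have h2 := (hxs.inner ℝ hxs).const_mul (1 / 2 : ℝ)
    have h3 : HasDerivAt (fun u => (1 / 2 : ℝ) * ‖x u - z‖ ^ 2)
        (1 / 2 * (⟪x s - z, x' s⟫ + ⟪x' s, x s - z⟫)) s := by
      simpa only [real_inner_self_eq_norm_sq] using h2
    have := (hd1 s hs).unique h3
    rw [this, real_inner_comm (x s - z)]
    ring
  -- second derivative identity
  have key2 : hz'' t = ⟪x' t, x' t⟫ + ⟪x'' t, x t - z⟫ := by
    have hφ : HasDerivAt (fun s => ⟪x' s, x s - z⟫)
        (⟪x' t, x' t⟫ + ⟪x'' t, x t - z⟫) t :=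
      (hx' t ht).inner ℝ ((hx t ht).sub_const z)
    have hw : HasDerivWithinAt hz' (⟪x' t, x' t⟫ + ⟪x'' t, x t - z⟫) (Ici t₀) t :=
      (hφ.hasDerivWithinAt).congr (fun s hs => key1 s hs) (key1 t ht)
    exact (uniqueDiffOn_Ici t₀ t ht).eq_deriv _ ((hd2 t ht).hasDerivWithinAt) hw
  -- g' identity
  have key3 : g' t = 2 * ⟪x'' t, x' t⟫ := by
    have h2 : HasDerivAt (fun s => ‖x' s‖ ^ 2)
        (⟪x' t, x'' t⟫ + ⟪x'' t, x' t⟫) t := by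
      simpa only [real_inner_self_eq_norm_sq] using (hx' t ht).inner ℝ (hx' t ht)
    have := (hg t ht).unique h2
    rw [this, real_inner_comm (x' t)]
    ring
  -- expand ⟪v, x t - z⟫ and ‖v‖²
  have hP : ⟪v, x t - z⟫ = -(⟪x'' t, x t - z⟫ + (α / t) * ⟪x' t, x t - z⟫) := by
    rw [hv2, inner_neg_left, inner_add_left, real_inner_smul_left]
  have hNv : ‖v‖ ^ 2 = ‖x'' t‖ ^ 2 + 2 * (α / t) * ⟪x'' t, x' t⟫
      + (α / t) ^ 2 * ‖x' t‖ ^ 2 := by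
    rw [hv2, norm_neg, norm_add_sq_real, real_inner_smul_right, norm_smul,
      Real.norm_eq_abs, abs_of_pos (div_pos hα htpos)]
    ring
  have hR : (0 : ℝ) ≤ ‖x' t‖ ^ 2 := by positivity
  have hgr := hgrow t ht
  have hc2 : (α / t) ^ 2 = α ^ 2 / t ^ 2 := by ring
  have hmain : L * (‖x'' t‖ ^ 2 + 2 * (α / t) * ⟪x'' t, x' t⟫
      + (α / t) ^ 2 * ‖x' t‖ ^ 2)
      ≤ -(⟪x'' t, x t - z⟫ + (α / t) * ⟪x' t, x t - z⟫) := by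
    rw [← hNv, ← hP]; exact hmono'
  rw [key1 t ht, key2, key3, real_inner_self_eq_norm_sq]
  have hfac : 0 ≤ (L * α ^ 2 / t ^ 2 - (1 + ε)) * ‖x' t‖ ^ 2 :=
    mul_nonneg (by linarith) hR
  rw [hc2] at hmain
  have hsub : L * (α ^ 2 / t ^ 2) * ‖x' t‖ ^ 2 = L * α ^ 2 / t ^ 2 * ‖x' t‖ ^ 2 := by
    ring
  ring_nf at hmain hfac ⊢
  linarith [hmain, hfac]
end

section
/- Let (x_k) be a sequence in a real Hilbert space, α_k ≥ 0, y_k = x_k + α_k(x_k − x_{k-1}), and h_k = ½‖x_k − z‖² for a fixed z. Then for all k ≥ 1: (h_{k+1} − h_k) − α_k(h_k − h_{k-1}) − ⟨x_{k+1} − y_k, x_{k+1} − z⟩ + ½‖x_{k+1} − y_k‖² = ½(α_k + α_k²)‖x_k − x_{k-1}‖². -/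
open scoped RealInnerProductSpace

/-- Algebraic identity for the inertial sequence: with
`y_k = x_k + a k (x k - x (k-1))` and `h_k = ½‖x_k - z‖²`, for all `k ≥ 1`,
`(h_{k+1} - h_k) - α_k (h_k - h_{k-1}) - ⟪x_{k+1} - y_k, x_{k+1} - z⟫
  + ½‖x_{k+1} - y_k‖² = ½(α_k + α_k²)‖x_k - x_{k-1}‖²`. -/
theorem inertial_identity {H : Type*} [NormedAddCommGroup H]
    [InnerProductSpace ℝ H] (x y : ℕ → H) (a : ℕ → ℝ) (ha : ∀ k, 0 ≤ a k)
    (z : H) (hy : ∀ k, y k = x k + a k • (x k - x (k - 1))) :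
    ∀ k, 1 ≤ k →
      ((1 / 2) * ‖x (k + 1) - z‖ ^ 2 - (1 / 2) * ‖x k - z‖ ^ 2) -
          a k * ((1 / 2) * ‖x k - z‖ ^ 2 - (1 / 2) * ‖x (k - 1) - z‖ ^ 2) -
          ⟪x (k + 1) - y k, x (k + 1) - z⟫ + (1 / 2) * ‖x (k + 1) - y k‖ ^ 2 =
        (1 / 2) * (a k + (a k) ^ 2) * ‖x k - x (k - 1)‖ ^ 2 := by
  intro k hk
  have h : ∀ u : H, ‖u‖ ^ 2 = ⟪u, u⟫ := fun u => (real_inner_self_eq_norm_sq u).symm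
  simp only [hy, h, inner_sub_left, inner_sub_right, inner_add_left, inner_add_right,
    inner_smul_left, inner_smul_right, RCLike.ofReal_real_eq_id, id, starRingEnd_apply, star_trivial]
  rw [real_inner_comm (x k) (x (k-1)), real_inner_comm (x (k+1)) (x (k-1)),
    real_inner_comm z (x (k-1)), real_inner_comm (x (k+1)) (x k),
    real_inner_comm z (x k), real_inner_comm z (x (k+1))] <;> ring
end

section
/- Let A be maximally monotone with S = A^{-1}(0) ≠ ∅, 0 ≤ α_k ≤ 1, s > 0, λ_k > 0, and let the sequences satisfy y_k = x_k + α_k(x_k − x_{k-1}) and x_{k+1} = y_k − s A_{λ_k + s}(y_k). Then for every z ∈ S and all k ≥ 1, with h_k = ½‖x_k − z‖²: (h_{k+1} − h_k) − α_k(h_k − h_{k-1}) + s λ_k ‖A_{λ_k+s}(y_k)‖² ≤ α_k‖x_k − x_{k-1}‖². -/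
open scoped RealInnerProductSpace

variable {H : Type*} [NormedAddCommGroup H] [InnerProductSpace ℝ H] [CompleteSpace H]

theorem my_aux (p q u : H) (a s lam : ℝ) (ha0 : 0 ≤ a) (ha1 : a ≤ 1)
    (hs : 0 < s) (hl : 0 < lam)
    (hcoer : (lam + s) * ‖u‖ ^ 2 ≤ ⟪u, p + a • q⟫) :
    ((1 / 2) * ‖p + a • q - s • u‖ ^ 2 - (1 / 2) * ‖p‖ ^ 2) -
        a * ((1 / 2) * ‖p‖ ^ 2 - (1 / 2) * ‖p - q‖ ^ 2) +
        s * lam * ‖u‖ ^ 2 ≤ a * ‖q‖ ^ 2 := by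
  have h1 : ‖p + a • q - s • u‖ ^ 2
      = ‖p + a • q‖ ^ 2 - 2 * (s * ⟪u, p + a • q⟫) + s ^ 2 * ‖u‖ ^ 2 := by
    rw [norm_sub_sq_real, norm_smul, real_inner_smul_right,
      real_inner_comm]
    simp [abs_of_pos hs]; ring
  have h2 : ‖p + a • q‖ ^ 2 = ‖p‖ ^ 2 + 2 * (a * ⟪p, q⟫) + a ^ 2 * ‖q‖ ^ 2 := by
    rw [norm_add_sq_real, norm_smul, real_inner_smul_right]
    simp [abs_of_nonneg ha0]; ring
  have h3 : ‖p - q‖ ^ 2 = ‖p‖ ^ 2 - 2 * ⟪p, q⟫ + ‖q‖ ^ 2 := norm_sub_sq_real p q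
  nlinarith [sq_nonneg ‖u‖, sq_nonneg ‖q‖, mul_nonneg ha0 (sq_nonneg ‖q‖),
    mul_le_of_le_one_left ha0 ha1, sq_nonneg (a * ‖q‖)]

/-- Discrete anchor inequality: along the iteration
`y_k = x_k + α_k(x_k - x_{k-1})`, `x_{k+1} = y_k - s A_{λ_k+s}(y_k)` with
`0 ≤ α_k ≤ 1`, for every `z ∈ S = A⁻¹(0)` and `h_k = ½‖x_k - z‖²`:
`(h_{k+1} - h_k) - α_k(h_k - h_{k-1}) + s λ_k ‖A_{λ_k+s}(y_k)‖² ≤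
  α_k ‖x_k - x_{k-1}‖²`. -/
theorem discrete_anchor (A : H → Set H) (hA : MaximallyMonotone A)
    (s : ℝ) (hs : 0 < s) (lam : ℕ → ℝ) (hlam : ∀ k, 0 < lam k)
    (a : ℕ → ℝ) (ha : ∀ k, 0 ≤ a k ∧ a k ≤ 1)
    (J : ℝ → H → H) (hJ : ∀ l : ℝ, 0 < l → IsResolvent A l (J l))
    (x y : ℕ → H)
    (hy : ∀ k, y k = x k + a k • (x k - x (k - 1)))
    (hx : ∀ k, x (k + 1) = y k - s • ((lam k + s)⁻¹ • (y k - J (lam k + s) (y k))))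
    (z : H) (hz : (0 : H) ∈ A z) :
    ∀ k, 1 ≤ k →
      ((1 / 2) * ‖x (k + 1) - z‖ ^ 2 - (1 / 2) * ‖x k - z‖ ^ 2) -
          a k * ((1 / 2) * ‖x k - z‖ ^ 2 - (1 / 2) * ‖x (k - 1) - z‖ ^ 2) +
          s * lam k * ‖(lam k + s)⁻¹ • (y k - J (lam k + s) (y k))‖ ^ 2 ≤
        a k * ‖x k - x (k - 1)‖ ^ 2 := by
  intro k hk
  set mu := lam k + s with hmu
  have hmupos : 0 < mu := by rw [hmu]; have := hlam k; linarith
  set u : H := mu⁻¹ • (y k - J mu (y k)) with hu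
  have hmem : u ∈ A (J mu (y k)) := hJ mu hmupos (y k)
  have hJeq : J mu (y k) = y k - mu • u := by
    rw [hu, smul_smul, mul_inv_cancel₀ hmupos.ne', one_smul]
    abel
  have hmono : 0 ≤ ⟪u - 0, J mu (y k) - z⟫ := hA.1 hmem hz
  have hcoer : mu * ‖u‖ ^ 2 ≤ ⟪u, y k - z⟫ := by
    rw [sub_zero, hJeq] at hmono
    have h2 : 0 ≤ ⟪u, (y k - z) - mu • u⟫ := by
      have e : y k - mu • u - z = (y k - z) - mu • u := by abel
      rwa [e] at hmono
    rw [inner_sub_right, real_inner_smul_right, real_inner_self_eq_norm_sq] at h2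
    linarith
  have hyz : y k - z = (x k - z) + a k • (x k - x (k - 1)) := by
    rw [hy k]; abel
  have hxz : x (k + 1) - z = (x k - z) + a k • (x k - x (k - 1)) - s • u := by
    rw [hx k, ← hmu, ← hu, hyz.symm]
    abel
  have hpq : x (k - 1) - z = (x k - z) - (x k - x (k - 1)) := by abel
  have := my_aux (x k - z) (x k - x (k - 1)) u (a k) s (lam k)
    (ha k).1 (ha k).2 hs (hlam k) (by rw [← hyz, ← hmu]; exact hcoer)
  rw [hxz, hpq]
  exact this
end

section
/- Let A be a maximally monotone operator on a real Hilbert space H satisfying the quadratic growth condition ⟨x*, x − z⟩ ≥ ν·dist(x,S)² for some ν > 0, for all x* ∈ Ax and z ∈ S = A^{-1}(0). Then for every λ ≥ λ₀ > 0 and x ∈ H: dist(x, S)² ≤ [2(1 + λ₀ν)/(λ₀ν)] · λ(λ + 1/(2ν)) · ‖A_λ(x)‖². -/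
open scoped RealInnerProductSpace

variable {H : Type*} [NormedAddCommGroup H] [InnerProductSpace ℝ H] [CompleteSpace H]

/-- Under the quadratic growth condition
`⟪x*, x - z⟫ ≥ ν dist(x,S)²` for all `x* ∈ Ax`, `z ∈ S = A⁻¹(0)`, one has, for
every `λ ≥ λ₀ > 0` and every `x`,
`dist(x,S)² ≤ [2(1+λ₀ν)/(λ₀ν)] λ(λ + 1/(2ν)) ‖A_λ(x)‖²`. -/
theorem quadratic_growth_estimate (A : H → Set H) (hA : MaximallyMonotone A)
    (ν : ℝ) (hν : 0 < ν) (S : Set H) (hSdef : S = {z : H | (0 : H) ∈ A z})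
    (hgrowth : ∀ x u z : H, u ∈ A x → z ∈ S →
      ν * (Metric.infDist x S) ^ 2 ≤ ⟪u, x - z⟫)
    (J : ℝ → H → H) (hJ : ∀ l : ℝ, 0 < l → IsResolvent A l (J l))
    (lam lam₀ : ℝ) (hlam₀ : 0 < lam₀) (hlam : lam₀ ≤ lam) :
    ∀ x : H, (Metric.infDist x S) ^ 2 ≤
      (2 * (1 + lam₀ * ν) / (lam₀ * ν)) * (lam * (lam + 1 / (2 * ν))) *
        ‖lam⁻¹ • (x - J lam x)‖ ^ 2 := by
  intro x
  have hlampos : 0 < lam := lt_of_lt_of_le hlam₀ hlam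
  -- nonnegativity of the constant
  have hCnn : 0 ≤ (2 * (1 + lam₀ * ν) / (lam₀ * ν)) * (lam * (lam + 1 / (2 * ν))) := by
    apply mul_nonneg
    · apply div_nonneg <;> nlinarith [mul_pos hlam₀ hν]
    · apply mul_nonneg hlampos.le
      have : 0 < 1 / (2 * ν) := by positivity
      linarith
  rcases S.eq_empty_or_nonempty with hS | hS
  · rw [hS, Metric.infDist_empty]
    simpa using mul_nonneg hCnn (sq_nonneg ‖lam⁻¹ • (x - J lam x)‖)
  set y := J lam x with hy
  set u : H := lam⁻¹ • (x - y) with hu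
  have huA : u ∈ A y := hJ lam hlampos x
  have hxy : x - y = lam • u := by
    rw [hu, smul_smul, mul_inv_cancel₀ hlampos.ne', one_smul]
  set dy := Metric.infDist y S with hdy
  have hdy0 : 0 ≤ dy := Metric.infDist_nonneg
  -- key inequality: ν dy² ≤ ‖u‖ * dist y z for all z ∈ S
  have key : ∀ z ∈ S, ν * dy ^ 2 ≤ ‖u‖ * dist y z := by
    intro z hz
    calc ν * dy ^ 2 ≤ ⟪u, y - z⟫ := hgrowth y u z huA hz
    _ ≤ ‖u‖ * ‖y - z‖ := real_inner_le_norm u (y - z)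
    _ = ‖u‖ * dist y z := by rw [dist_eq_norm]
  -- consequently ν dy² ≤ ‖u‖ * dy
  have hkey2 : ν * dy ^ 2 ≤ ‖u‖ * dy := by
    rcases (norm_nonneg u).eq_or_lt with h0 | h0
    · obtain ⟨z, hz⟩ := hS
      have := key z hz
      rw [← h0] at this ⊢
      simpa using this
    · have hle : ν * dy ^ 2 / ‖u‖ ≤ dy := by
        by_contra hcon
        push_neg at hcon
        obtain ⟨z, hz, hzlt⟩ := (Metric.infDist_lt_iff hS).1 hcon
        have := key z hz
        have : ν * dy ^ 2 / ‖u‖ ≤ dist y z := (div_le_iff₀ h0).2 (by linarith [key z hz])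
        linarith
      calc ν * dy ^ 2 = (ν * dy ^ 2 / ‖u‖) * ‖u‖ := by field_simp
      _ ≤ dy * ‖u‖ := mul_le_mul_of_nonneg_right hle h0.le
      _ = ‖u‖ * dy := mul_comm _ _
  -- hence ν * dy ≤ ‖u‖
  have hdyu : ν * dy ≤ ‖u‖ := by
    rcases hdy0.eq_or_lt with h0 | h0
    · rw [← h0]; simpa using norm_nonneg u
    · have : ν * dy * dy ≤ ‖u‖ * dy := by nlinarith
      exact le_of_mul_le_mul_right this h0
  -- distance estimate
  have hdx : Metric.infDist x S ≤ (lam + 1 / ν) * ‖u‖ := by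
    have h1 : Metric.infDist x S ≤ dy + dist x y := Metric.infDist_le_infDist_add_dist
    have h2 : dist x y = lam * ‖u‖ := by
      rw [dist_eq_norm, hxy, norm_smul, Real.norm_eq_abs, abs_of_pos hlampos]
    have h3 : dy ≤ ‖u‖ / ν := (le_div_iff₀ hν).2 (by linarith [hdyu])
    rw [h2] at h1
    calc Metric.infDist x S ≤ dy + lam * ‖u‖ := h1
    _ ≤ ‖u‖ / ν + lam * ‖u‖ := by linarith
    _ = (lam + 1 / ν) * ‖u‖ := by ring
  -- square and compare constants
  have hsq : (Metric.infDist x S) ^ 2 ≤ (lam + 1 / ν) ^ 2 * ‖u‖ ^ 2 := by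
    have := pow_le_pow_left₀ Metric.infDist_nonneg hdx 2
    calc (Metric.infDist x S) ^ 2 ≤ ((lam + 1 / ν) * ‖u‖) ^ 2 := this
    _ = (lam + 1 / ν) ^ 2 * ‖u‖ ^ 2 := by ring
  have hconst : (lam + 1 / ν) ^ 2 ≤
      (2 * (1 + lam₀ * ν) / (lam₀ * ν)) * (lam * (lam + 1 / (2 * ν))) := by
    rw [div_mul_eq_mul_div, le_div_iff₀ (mul_pos hlam₀ hν)]
    have h1 : (lam + 1 / ν) ^ 2 * (lam₀ * ν) = lam₀ * (lam * ν + 1) ^ 2 / ν := by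
      field_simp
    have h2 : 2 * (1 + lam₀ * ν) * (lam * (lam + 1 / (2 * ν))) =
        (1 + lam₀ * ν) * (lam * ν) * (2 * (lam * ν) + 1) / (ν * ν) := by
      field_simp
    rw [h1, h2]
    rw [div_le_div_iff₀ hν (by positivity : (0:ℝ) < ν * ν)]
    set a := lam * ν with ha
    set b := lam₀ * ν with hb
    have hab : b ≤ a := by
      apply mul_le_mul_of_nonneg_right hlam hν.le
    have hbpos : 0 < b := mul_pos hlam₀ hν
    have hapos : 0 < a := mul_pos hlampos hν
    have hpoly : b * (a + 1) ^ 2 ≤ (1 + b) * a * (2 * a + 1) := by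
      nlinarith [mul_nonneg (sub_nonneg.2 hab) hapos.le, sq_nonneg a,
        mul_pos hapos hapos, mul_nonneg hbpos.le (sq_nonneg (a - 1))]
    calc lam₀ * (a + 1) ^ 2 * (ν * ν) = (b * (a + 1) ^ 2) * ν := by rw [hb]; ring
    _ ≤ ((1 + b) * a * (2 * a + 1)) * ν := by
        exact mul_le_mul_of_nonneg_right hpoly hν.le
    _ = (1 + b) * a * (2 * a + 1) * ν := by ring
  calc (Metric.infDist x S) ^ 2 ≤ (lam + 1 / ν) ^ 2 * ‖u‖ ^ 2 := hsq
  _ ≤ (2 * (1 + lam₀ * ν) / (lam₀ * ν)) * (lam * (lam + 1 / (2 * ν))) * ‖u‖ ^ 2 :=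
      mul_le_mul_of_nonneg_right hconst (sq_nonneg _)
end
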